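/- arXiv:1611.03671 — 4 statements merged into one kernel-verified Lean document; each statement's English description precedes it below -/
import Mathlib

section
/- There exists an infinite sequence G_0, G_1, G_2, ... of finite simple graphs, each of which is diamond-free, (P_2 + P_4)-free and P_6-free, such that for all indices i ≠ j the graph G_i is not an induced subgraph of G_j. Consequently, the class of (diamond, P_2 + P_4, P_6)-free graphs is not well-quasi-ordered by the induced subgraph relation. -/
/-- The diamond: four vertices `0,1,2,3`, every pair adjacent except `0,1`
(the complement of `2P₁ + P₂`). -/
def diamond : SimpleGraph (Fin 4) where
  Adj u v := u ≠ v ∧ ¬((u = 0 ∧ v = 1) ∨ (u = 1 ∧ v = 0))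
  symm := ⟨by intro u v; revert u v; decide⟩
  loopless := ⟨by intro u; revert u; decide⟩

/-- `P₂ + P₄`: the disjoint union of a path on two vertices (`0 – 1`)
and a path on four vertices (`2 – 3 – 4 – 5`). -/
def P2P4 : SimpleGraph (Fin 6) where
  Adj u v := (u = 0 ∧ v = 1) ∨ (u = 1 ∧ v = 0) ∨
             (u = 2 ∧ v = 3) ∨ (u = 3 ∧ v = 2) ∨
             (u = 3 ∧ v = 4) ∨ (u = 4 ∧ v = 3) ∨
             (u = 4 ∧ v = 5) ∨ (u = 5 ∧ v = 4)
  symm := ⟨by intro u v; revert u v; decide⟩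
  loopless := ⟨by intro u; revert u; decide⟩

/-- `P₆`: the path on six vertices `0 – 1 – 2 – 3 – 4 – 5`. -/
def P6 : SimpleGraph (Fin 6) where
  Adj u v := u.val + 1 = v.val ∨ v.val + 1 = u.val
  symm := ⟨fun u v h => Or.symm h⟩
  loopless := ⟨by intro u h; rcases h with h | h <;> omega⟩

namespace DiamondAntichain

/-- The size of the `n`-th graph in the antichain. -/
def K (n : ℕ) : ℕ := 4 * n + 12

lemma K_pos (n : ℕ) : 0 < K n := by unfold K; omega

instance (n : ℕ) : NeZero (K n) := ⟨by have := K_pos n; omega⟩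

lemma four_dvd_K (n : ℕ) : 4 ∣ K n := ⟨n + 3, by unfold K; ring⟩

/-- The residue class map `ZMod (K n) → ZMod 4`. -/
def cl (n : ℕ) : ZMod (K n) →+* ZMod 4 := ZMod.castHom (four_dvd_K n) (ZMod 4)

/-- The antichain member: a cycle of length `K n` together with all edges between
residue classes `0` and `2` modulo `4`. -/
def Gr (n : ℕ) : SimpleGraph (ZMod (K n)) where
  Adj x y := x ≠ y ∧ (y = x + 1 ∨ y = x - 1 ∨
    (cl n x = 0 ∧ cl n y = 2) ∨ (cl n x = 2 ∧ cl n y = 0))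
  symm := ⟨by
    rintro x y ⟨hne, h⟩
    refine ⟨hne.symm, ?_⟩
    rcases h with h | h | h | h
    · right; left; rw [h]; ring
    · left; rw [h]; ring
    · right; right; right; exact ⟨h.2, h.1⟩
    · right; right; left; exact ⟨h.2, h.1⟩⟩
  loopless := ⟨fun x h => h.1 rfl⟩

lemma gr_adj {n : ℕ} {x y : ZMod (K n)} :
    (Gr n).Adj x y ↔ x ≠ y ∧ (y = x + 1 ∨ y = x - 1 ∨
      (cl n x = 0 ∧ cl n y = 2) ∨ (cl n x = 2 ∧ cl n y = 0)) := Iff.rfl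

lemma natCast_ne_zero {n : ℕ} {m : ℕ} (h1 : 0 < m) (h2 : m < K n) :
    ((m : ℕ) : ZMod (K n)) ≠ 0 := by
  intro h
  have := (ZMod.natCast_eq_zero_iff m (K n)).mp h
  have := Nat.le_of_dvd h1 this
  omega

lemma two_ne_zero' (n : ℕ) : (2 : ZMod (K n)) ≠ 0 := by
  have := natCast_ne_zero (n := n) (m := 2) (by omega) (by have := K_pos n; unfold K; omega)
  simpa using this

lemma four_ne_zero' (n : ℕ) : (4 : ZMod (K n)) ≠ 0 := by
  have := natCast_ne_zero (n := n) (m := 4) (by omega) (by unfold K; omega)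
  simpa using this

lemma cl_add_one {n : ℕ} (x : ZMod (K n)) : cl n (x + 1) = cl n x + 1 := by
  simp [map_add, map_one]

lemma cl_sub_one {n : ℕ} (x : ZMod (K n)) : cl n (x - 1) = cl n x - 1 := by
  simp [map_sub, map_one]

lemma cl_cases {n : ℕ} (x : ZMod (K n)) :
    cl n x = 0 ∨ cl n x = 1 ∨ cl n x = 2 ∨ cl n x = 3 := by
  have : ∀ a : ZMod 4, a = 0 ∨ a = 1 ∨ a = 2 ∨ a = 3 := by decide
  exact this _

/-- A vertex of odd residue class has only its two cycle neighbours. -/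
lemma small_nbrs {n : ℕ} {x y : ZMod (K n)} (hx : cl n x = 1 ∨ cl n x = 3)
    (h : (Gr n).Adj x y) : y = x + 1 ∨ y = x - 1 := by
  rcases h.2 with h' | h' | h' | h'
  · exact Or.inl h'
  · exact Or.inr h'
  · rcases hx with hx | hx <;> rw [hx] at h' <;> exact absurd h'.1 (by decide)
  · rcases hx with hx | hx <;> rw [hx] at h' <;> exact absurd h'.1 (by decide)

/-- Any class-0 vertex is adjacent to any class-2 vertex. -/
lemma big_adj {n : ℕ} {x y : ZMod (K n)} (hx : cl n x = 0) (hy : cl n y = 2) :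
    (Gr n).Adj x y := by
  refine ⟨fun h => ?_, Or.inr (Or.inr (Or.inl ⟨hx, hy⟩))⟩
  rw [h, hy] at hx; exact absurd hx (by decide)

/-- An edge between two even-class vertices joins class 0 to class 2. -/
lemma adj_even_pair {n : ℕ} {x y : ZMod (K n)} (h : (Gr n).Adj x y)
    (hx : cl n x = 0 ∨ cl n x = 2) (hy : cl n y = 0 ∨ cl n y = 2) :
    (cl n x = 0 ∧ cl n y = 2) ∨ (cl n x = 2 ∧ cl n y = 0) := by
  rcases h.2 with h' | h' | h' | h'
  · exfalso
    have := cl_add_one x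
    rw [← h'] at this
    rcases hx with hx | hx <;> rw [hx] at this <;>
      rcases hy with hy | hy <;> rw [hy] at this <;> exact absurd this (by decide)
  · exfalso
    have := cl_sub_one x
    rw [← h'] at this
    rcases hx with hx | hx <;> rw [hx] at this <;>
      rcases hy with hy | hy <;> rw [hy] at this <;> exact absurd this (by decide)
  · exact Or.inl h'
  · exact Or.inr h'

/-- A common neighbour of a class-0/class-2 edge is a cycle neighbour of both ends. -/
lemma common_nbr {n : ℕ} {p q z : ZMod (K n)} (hp : cl n p = 0) (hq : cl n q = 2)
    (h1 : (Gr n).Adj z p) (h2 : (Gr n).Adj z q) :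
    (z = p + 1 ∨ z = p - 1) ∧ (z = q + 1 ∨ z = q - 1) := by
  have hz : ¬(cl n z = 2 ∧ cl n p = 0) → (z = p + 1 ∨ z = p - 1) := by
    intro hcon
    rcases h1.2 with h' | h' | h' | h'
    · right; rw [h']; ring
    · left; rw [h']; ring
    · rw [hp] at h'; exact absurd h'.2 (by decide)
    · exact absurd h' hcon
  have hz2 : ¬(cl n z = 0 ∧ cl n q = 2) → (z = q + 1 ∨ z = q - 1) := by
    intro hcon
    rcases h2.2 with h' | h' | h' | h'
    · right; rw [h']; ring
    · left; rw [h']; ring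
    · exact absurd h' hcon
    · rw [hq] at h'; exact absurd h'.2 (by decide)
  by_cases hcz : cl n z = 2
  · -- then z not adjacent to q by any clause unless cycle; but also check z-p clause:
    -- clause 4 for h1 might hold; use h2 to pin down z near q, and h1 near p.
    have hq' : z = q + 1 ∨ z = q - 1 := by
      apply hz2; rintro ⟨h0, -⟩; rw [hcz] at h0; exact absurd h0 (by decide)
    -- for p: clause 4 (cl z = 2 ∧ cl p = 0) could hold; rule it out via q-side classes
    rcases hq' with h' | h'
    · exfalso
      have := cl_add_one q; rw [← h', hcz, hq] at this; exact absurd this (by decide)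
    · exfalso
      have := cl_sub_one q; rw [← h', hcz, hq] at this; exact absurd this (by decide)
  · constructor
    · apply hz; rintro ⟨h2', -⟩; exact hcz h2'
    · apply hz2; rintro ⟨h0, -⟩
      -- cl z = 0: then z adjacent to p must be via cycle; check h1 clauses
      rcases h1.2 with h' | h' | h' | h'
      · have hc := cl_add_one z; rw [← h', hp, h0] at hc; exact absurd hc (by decide)
      · have hc := cl_sub_one z; rw [← h', hp, h0] at hc; exact absurd hc (by decide)
      · rw [hp] at h'; exact absurd h'.2 (by decide)
      · rw [h0] at h'; exact absurd h'.1 (by decide)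

lemma three_in_two {α : Type*} {p q a b c : α} (ha : a = p ∨ a = q) (hb : b = p ∨ b = q)
    (hc : c = p ∨ c = q) (hab : a ≠ b) (hac : a ≠ c) (hbc : b ≠ c) : False := by
  rcases ha with rfl | rfl <;> rcases hb with hb | hb <;> rcases hc with hc | hc <;>
    simp_all

/-- Key middle-vertex lemma: in an induced path `a - b - t`, the middle vertex `b`
has even residue class. -/
lemma interior_even {n : ℕ} {a b t : ZMod (K n)} (h1 : (Gr n).Adj a b)
    (h2 : (Gr n).Adj b t) (h3 : ¬(Gr n).Adj a t) (hat : a ≠ t) :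
    cl n b = 0 ∨ cl n b = 2 := by
  rcases cl_cases b with h | h | h | h
  · exact Or.inl h
  · exfalso
    have ha := small_nbrs (Or.inl h) h1.symm
    have ht := small_nbrs (Or.inl h) h2
    have c1 : cl n (b + 1) = 2 := by rw [cl_add_one, h]; decide
    have c0 : cl n (b - 1) = 0 := by rw [cl_sub_one, h]; decide
    rcases ha with rfl | rfl <;> rcases ht with rfl | rfl
    · exact hat rfl
    · exact h3 ((big_adj c0 c1).symm)
    · exact h3 (big_adj c0 c1)
    · exact hat rfl
  · exact Or.inr h
  · exfalso
    have ha := small_nbrs (Or.inr h) h1.symm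
    have ht := small_nbrs (Or.inr h) h2
    have c1 : cl n (b + 1) = 0 := by rw [cl_add_one, h]; decide
    have c0 : cl n (b - 1) = 2 := by rw [cl_sub_one, h]; decide
    rcases ha with rfl | rfl <;> rcases ht with rfl | rfl
    · exact hat rfl
    · exact h3 ((big_adj c1 c0))
    · exact h3 (big_adj c1 c0).symm
    · exact hat rfl

/-- `Gr n` is diamond-free: every edge has at most one common neighbour. -/
lemma diamond_free (n : ℕ) : IsEmpty (diamond ↪g Gr n) := by
  constructor
  intro e
  have huv : (Gr n).Adj (e 2) (e 3) := e.map_adj_iff.mpr ⟨by decide, by decide⟩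
  have hwu : (Gr n).Adj (e 0) (e 2) := e.map_adj_iff.mpr ⟨by decide, by decide⟩
  have hwv : (Gr n).Adj (e 0) (e 3) := e.map_adj_iff.mpr ⟨by decide, by decide⟩
  have hxu : (Gr n).Adj (e 1) (e 2) := e.map_adj_iff.mpr ⟨by decide, by decide⟩
  have hxv : (Gr n).Adj (e 1) (e 3) := e.map_adj_iff.mpr ⟨by decide, by decide⟩
  set u := e 2 with hu
  set v := e 3 with hv
  set w := e 0 with hw
  set x := e 1 with hx
  have hwx : w ≠ x := fun h => absurd (e.injective h) (by decide)
  have hvw : v ≠ w := fun h => absurd (e.injective h) (by decide)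
  have hvx : v ≠ x := fun h => absurd (e.injective h) (by decide)
  have huw : u ≠ w := fun h => absurd (e.injective h) (by decide)
  have hux : u ≠ x := fun h => absurd (e.injective h) (by decide)
  -- case on the class of u and v
  rcases cl_cases u with hcu | hcu | hcu | hcu
  · -- u has class 0
    rcases cl_cases v with hcv | hcv | hcv | hcv
    · -- both class 0: edge u v impossible
      rcases (adj_even_pair huv (Or.inl hcu) (Or.inl hcv)) with h | h
      · rw [hcv] at h; exact absurd h.2 (by decide)
      · rw [hcu] at h; exact absurd h.1 (by decide)
    · -- v odd: all of u, w, x in {v±1}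
      have h1 := small_nbrs (Or.inl hcv) huv.symm
      have h2 := small_nbrs (Or.inl hcv) hwv.symm
      have h3 := small_nbrs (Or.inl hcv) hxv.symm
      exact three_in_two h1 h2 h3 huw hux hwx
    · -- u class 0, v class 2
      have hcw := common_nbr hcu hcv hwu hwv
      have hcx := common_nbr hcu hcv hxu hxv
      rcases hcw.1 with hw1 | hw1 <;> rcases hcw.2 with hw2 | hw2 <;>
        rcases hcx.1 with hx1 | hx1 <;> rcases hcx.2 with hx2 | hx2
      all_goals first
        | (exact huv.ne (by linear_combination hw1 - hw2))
        | (exact huv.ne (by linear_combination hw2 - hw1))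
        | (exact huv.ne (by linear_combination hx1 - hx2))
        | (exact huv.ne (by linear_combination hx2 - hx1))
        | (exact hwx (hw1.trans hx1.symm))
        | (exact hwx (hw2.trans hx2.symm))
        | (exact four_ne_zero' n (by linear_combination hw1 - hw2 - hx1 + hx2))
        | (exact four_ne_zero' n (by linear_combination hw2 - hw1 - hx2 + hx1))
        | (exact four_ne_zero' n (by linear_combination hw1 - hw2 + hx1 - hx2))
        | (exact four_ne_zero' n (by linear_combination hw2 - hw1 + hx2 - hx1))
    · have h1 := small_nbrs (Or.inr hcv) huv.symm
      have h2 := small_nbrs (Or.inr hcv) hwv.symm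
      have h3 := small_nbrs (Or.inr hcv) hxv.symm
      exact three_in_two h1 h2 h3 huw hux hwx
  · -- u odd
    have h1 := small_nbrs (Or.inl hcu) huv
    have h2 := small_nbrs (Or.inl hcu) hwu.symm
    have h3 := small_nbrs (Or.inl hcu) hxu.symm
    exact three_in_two h1 h2 h3 hvw hvx hwx
  · -- u has class 2
    rcases cl_cases v with hcv | hcv | hcv | hcv
    · -- u class 2, v class 0
      have hcw := common_nbr hcv hcu hwv hwu
      have hcx := common_nbr hcv hcu hxv hxu
      rcases hcw.1 with hw1 | hw1 <;> rcases hcw.2 with hw2 | hw2 <;>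
        rcases hcx.1 with hx1 | hx1 <;> rcases hcx.2 with hx2 | hx2
      all_goals first
        | (exact huv.ne (by linear_combination hw1 - hw2))
        | (exact huv.ne (by linear_combination hw2 - hw1))
        | (exact huv.ne (by linear_combination hx1 - hx2))
        | (exact huv.ne (by linear_combination hx2 - hx1))
        | (exact hwx (hw1.trans hx1.symm))
        | (exact hwx (hw2.trans hx2.symm))
        | (exact four_ne_zero' n (by linear_combination hw1 - hw2 - hx1 + hx2))
        | (exact four_ne_zero' n (by linear_combination hw2 - hw1 - hx2 + hx1))
        | (exact four_ne_zero' n (by linear_combination hw1 - hw2 + hx1 - hx2))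
        | (exact four_ne_zero' n (by linear_combination hw2 - hw1 + hx2 - hx1))
    · have h1 := small_nbrs (Or.inl hcv) huv.symm
      have h2 := small_nbrs (Or.inl hcv) hwv.symm
      have h3 := small_nbrs (Or.inl hcv) hxv.symm
      exact three_in_two h1 h2 h3 huw hux hwx
    · rcases (adj_even_pair huv (Or.inr hcu) (Or.inr hcv)) with h | h
      · rw [hcu] at h; exact absurd h.1 (by decide)
      · rw [hcv] at h; exact absurd h.2 (by decide)
    · have h1 := small_nbrs (Or.inr hcv) huv.symm
      have h2 := small_nbrs (Or.inr hcv) hwv.symm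
      have h3 := small_nbrs (Or.inr hcv) hxv.symm
      exact three_in_two h1 h2 h3 huw hux hwx
  · -- u odd
    have h1 := small_nbrs (Or.inr hcu) huv
    have h2 := small_nbrs (Or.inr hcu) hwu.symm
    have h3 := small_nbrs (Or.inr hcu) hxu.symm
    exact three_in_two h1 h2 h3 hvw hvx hwx

/-- `Gr n` is `P6`-free. -/
lemma p6_free (n : ℕ) : IsEmpty (P6 ↪g Gr n) := by
  constructor
  intro e
  have adj : ∀ a b : Fin 6, (a.val + 1 = b.val ∨ b.val + 1 = a.val) →
      (Gr n).Adj (e a) (e b) := fun a b h => e.map_adj_iff.mpr h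
  have nadj : ∀ a b : Fin 6, ¬(a.val + 1 = b.val ∨ b.val + 1 = a.val) →
      ¬(Gr n).Adj (e a) (e b) := fun a b h h' => h (e.map_adj_iff.mp h')
  have hne : ∀ a b : Fin 6, a ≠ b → e a ≠ e b := fun a b h h' => h (e.injective h')
  have h1 : cl n (e 1) = 0 ∨ cl n (e 1) = 2 :=
    interior_even (adj 0 1 (by decide)) (adj 1 2 (by decide))
      (nadj 0 2 (by decide)) (hne 0 2 (by decide))
  have h2 : cl n (e 2) = 0 ∨ cl n (e 2) = 2 :=
    interior_even (adj 1 2 (by decide)) (adj 2 3 (by decide))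
      (nadj 1 3 (by decide)) (hne 1 3 (by decide))
  have h3 : cl n (e 3) = 0 ∨ cl n (e 3) = 2 :=
    interior_even (adj 2 3 (by decide)) (adj 3 4 (by decide))
      (nadj 2 4 (by decide)) (hne 2 4 (by decide))
  have h4 : cl n (e 4) = 0 ∨ cl n (e 4) = 2 :=
    interior_even (adj 3 4 (by decide)) (adj 4 5 (by decide))
      (nadj 3 5 (by decide)) (hne 3 5 (by decide))
  have p12 := adj_even_pair (adj 1 2 (by decide)) h1 h2
  have p23 := adj_even_pair (adj 2 3 (by decide)) h2 h3
  have p34 := adj_even_pair (adj 3 4 (by decide)) h3 h4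
  have hnot14 := nadj 1 4 (by decide)
  rcases p12 with ⟨ha, hb⟩ | ⟨ha, hb⟩ <;> rcases p23 with ⟨hc, hd⟩ | ⟨hc, hd⟩ <;>
    rcases p34 with ⟨hf, hg⟩ | ⟨hf, hg⟩ <;>
      first
        | (exact absurd (hb.symm.trans hc) (by decide))
        | (exact absurd (hd.symm.trans hf) (by decide))
        | (exact hnot14 (big_adj ha hg))
        | (exact hnot14 (big_adj hg ha).symm)

/-- `Gr n` is `(P2 + P4)`-free. -/
lemma p2p4_free (n : ℕ) : IsEmpty (P2P4 ↪g Gr n) := by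
  constructor
  intro e
  have adj : ∀ a b : Fin 6, ((a = 0 ∧ b = 1) ∨ (a = 1 ∧ b = 0) ∨
      (a = 2 ∧ b = 3) ∨ (a = 3 ∧ b = 2) ∨
      (a = 3 ∧ b = 4) ∨ (a = 4 ∧ b = 3) ∨
      (a = 4 ∧ b = 5) ∨ (a = 5 ∧ b = 4)) → (Gr n).Adj (e a) (e b) :=
    fun a b h => e.map_adj_iff.mpr h
  have nadj : ∀ a b : Fin 6, ¬((a = 0 ∧ b = 1) ∨ (a = 1 ∧ b = 0) ∨
      (a = 2 ∧ b = 3) ∨ (a = 3 ∧ b = 2) ∨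
      (a = 3 ∧ b = 4) ∨ (a = 4 ∧ b = 3) ∨
      (a = 4 ∧ b = 5) ∨ (a = 5 ∧ b = 4)) → ¬(Gr n).Adj (e a) (e b) :=
    fun a b h h' => h (e.map_adj_iff.mp h')
  have hne : ∀ a b : Fin 6, a ≠ b → e a ≠ e b := fun a b h h' => h (e.injective h')
  have h3 : cl n (e 3) = 0 ∨ cl n (e 3) = 2 :=
    interior_even (adj 2 3 (by decide)) (adj 3 4 (by decide))
      (nadj 2 4 (by decide)) (hne 2 4 (by decide))
  have h4 : cl n (e 4) = 0 ∨ cl n (e 4) = 2 :=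
    interior_even (adj 3 4 (by decide)) (adj 4 5 (by decide))
      (nadj 3 5 (by decide)) (hne 3 5 (by decide))
  have p34 := adj_even_pair (adj 3 4 (by decide)) h3 h4
  -- one endpoint of the edge (e 0, e 1) has even class
  have hedge : (Gr n).Adj (e 0) (e 1) := adj 0 1 (by decide)
  have heven : (cl n (e 0) = 0 ∨ cl n (e 0) = 2) ∨ (cl n (e 1) = 0 ∨ cl n (e 1) = 2) := by
    rcases cl_cases (e 0) with h | h | h | h
    · exact Or.inl (Or.inl h)
    · right
      have := small_nbrs (Or.inl h) hedge
      rcases this with h' | h'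
      · have := cl_add_one (e 0); rw [← h', h] at this
        right; rw [this]; decide
      · have := cl_sub_one (e 0); rw [← h', h] at this
        left; rw [this]; decide
    · exact Or.inl (Or.inr h)
    · right
      have := small_nbrs (Or.inr h) hedge
      rcases this with h' | h'
      · have := cl_add_one (e 0); rw [← h', h] at this
        left; rw [this]; decide
      · have := cl_sub_one (e 0); rw [← h', h] at this
        right; rw [this]; decide
  have hn03 := nadj 0 3 (by decide)
  have hn04 := nadj 0 4 (by decide)
  have hn13 := nadj 1 3 (by decide)
  have hn14 := nadj 1 4 (by decide)
  rcases heven with (h | h) | (h | h) <;> rcases p34 with ⟨ha, hb⟩ | ⟨ha, hb⟩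
  · exact hn04 (big_adj h hb)
  · exact hn03 (big_adj h ha)
  · exact hn03 (big_adj ha h).symm
  · exact hn04 (big_adj hb h).symm
  · exact hn14 (big_adj h hb)
  · exact hn13 (big_adj h ha)
  · exact hn13 (big_adj ha h).symm
  · exact hn14 (big_adj hb h).symm

/-- No embedding from a bigger graph into a smaller one (cardinality). -/
lemma no_embed_down {i j : ℕ} (h : j < i) : IsEmpty (Gr i ↪g Gr j) := by
  constructor
  intro f
  have hcard := Fintype.card_le_of_embedding f.toEmbedding
  rw [ZMod.card, ZMod.card] at hcard
  unfold K at hcard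
  omega

/-- No embedding from a smaller graph into a bigger one (rigidity). -/
lemma no_embed_up {i j : ℕ} (h : i < j) : IsEmpty (Gr i ↪g Gr j) := by
  constructor
  intro f
  -- Step 1: even-class vertices map to even-class vertices.
  have step1 : ∀ x : ZMod (K i), (cl i x = 0 ∨ cl i x = 2) →
      (cl j (f x) = 0 ∨ cl j (f x) = 2) := by
    intro x hx
    rcases cl_cases (f x) with h' | h' | h' | h'
    · exact Or.inl h'
    · exfalso
      -- f x would have only two neighbours, but x has three.
      obtain ⟨z, hz, hzadj⟩ : ∃ z : ZMod (K i), (cl i z = 0 ∨ cl i z = 2) ∧ (Gr i).Adj x z := by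
        rcases hx with hx | hx
        · exact ⟨(2 : ZMod (K i)), Or.inr (map_ofNat (cl i) 2), big_adj hx (map_ofNat (cl i) 2)⟩
        · exact ⟨(0 : ZMod (K i)), Or.inl (map_zero (cl i)), (big_adj (map_zero (cl i)) hx).symm⟩
      have hxz : x ≠ z := hzadj.ne
      have hadd : (Gr i).Adj x (x + 1) := by
        refine ⟨fun hh => ?_, Or.inl rfl⟩
        · have : (1 : ZMod (K i)) = 0 := by linear_combination -hh
          have h2 := two_ne_zero' i
          rcases hx with hx | hx <;>
            exact (two_ne_zero' i) (by linear_combination 2 * this)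
      have hsub : (Gr i).Adj x (x - 1) := by
        refine ⟨fun hh => ?_, Or.inr (Or.inl rfl)⟩
        · have : (1 : ZMod (K i)) = 0 := by linear_combination hh
          exact (two_ne_zero' i) (by linear_combination 2 * this)
      have d1 : x + 1 ≠ x - 1 := fun hh => (two_ne_zero' i) (by linear_combination hh)
      have d2 : x + 1 ≠ z := by
        intro hh
        have := cl_add_one x
        rw [hh] at this
        rcases hx with hx | hx <;> rw [hx] at this <;> rcases hz with hz | hz <;>
          rw [hz] at this <;> exact absurd this (by decide)
      have d3 : x - 1 ≠ z := by
        intro hh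
        have := cl_sub_one x
        rw [hh] at this
        rcases hx with hx | hx <;> rw [hx] at this <;> rcases hz with hz | hz <;>
          rw [hz] at this <;> exact absurd this (by decide)
      have s1 := small_nbrs (Or.inl h') (f.map_adj_iff.mpr hadd)
      have s2 := small_nbrs (Or.inl h') (f.map_adj_iff.mpr hsub)
      have s3 := small_nbrs (Or.inl h') (f.map_adj_iff.mpr hzadj)
      exact three_in_two s1 s2 s3 (fun hh => d1 (f.injective hh))
        (fun hh => d2 (f.injective hh)) (fun hh => d3 (f.injective hh))
    · exact Or.inr h'
    · exfalso
      obtain ⟨z, hz, hzadj⟩ : ∃ z : ZMod (K i), (cl i z = 0 ∨ cl i z = 2) ∧ (Gr i).Adj x z := by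
        rcases hx with hx | hx
        · exact ⟨(2 : ZMod (K i)), Or.inr (map_ofNat (cl i) 2), big_adj hx (map_ofNat (cl i) 2)⟩
        · exact ⟨(0 : ZMod (K i)), Or.inl (map_zero (cl i)), (big_adj (map_zero (cl i)) hx).symm⟩
      have hadd : (Gr i).Adj x (x + 1) := by
        refine ⟨fun hh => ?_, Or.inl rfl⟩
        exact (two_ne_zero' i) (by linear_combination -2 * hh)
      have hsub : (Gr i).Adj x (x - 1) := by
        refine ⟨fun hh => ?_, Or.inr (Or.inl rfl)⟩
        exact (two_ne_zero' i) (by linear_combination 2 * hh)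
      have d1 : x + 1 ≠ x - 1 := fun hh => (two_ne_zero' i) (by linear_combination hh)
      have d2 : x + 1 ≠ z := by
        intro hh
        have := cl_add_one x
        rw [hh] at this
        rcases hx with hx | hx <;> rw [hx] at this <;> rcases hz with hz | hz <;>
          rw [hz] at this <;> exact absurd this (by decide)
      have d3 : x - 1 ≠ z := by
        intro hh
        have := cl_sub_one x
        rw [hh] at this
        rcases hx with hx | hx <;> rw [hx] at this <;> rcases hz with hz | hz <;>
          rw [hz] at this <;> exact absurd this (by decide)
      have s1 := small_nbrs (Or.inr h') (f.map_adj_iff.mpr hadd)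
      have s2 := small_nbrs (Or.inr h') (f.map_adj_iff.mpr hsub)
      have s3 := small_nbrs (Or.inr h') (f.map_adj_iff.mpr hzadj)
      exact three_in_two s1 s2 s3 (fun hh => d1 (f.injective hh))
        (fun hh => d2 (f.injective hh)) (fun hh => d3 (f.injective hh))
  -- Step 2: odd vertices step to cycle-neighbours.
  have step2 : ∀ v : ZMod (K i), (cl i v = 1 ∨ cl i v = 3) →
      (f (v + 1) = f v + 1 ∨ f (v + 1) = f v - 1) ∧
      (f (v - 1) = f v + 1 ∨ f (v - 1) = f v - 1) := by
    intro v hv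
    have hv1 : (cl i (v + 1) = 0 ∨ cl i (v + 1) = 2) := by
      rcases hv with hv | hv
      · right; rw [cl_add_one, hv]; decide
      · left; rw [cl_add_one, hv]; decide
    have hv2 : (cl i (v - 1) = 0 ∨ cl i (v - 1) = 2) := by
      rcases hv with hv | hv
      · left; rw [cl_sub_one, hv]; decide
      · right; rw [cl_sub_one, hv]; decide
    have hadjp : (Gr i).Adj v (v + 1) := by
      refine ⟨fun hh => ?_, Or.inl rfl⟩
      exact (two_ne_zero' i) (by linear_combination -2 * hh)
    have hadjm : (Gr i).Adj v (v - 1) := by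
      refine ⟨fun hh => ?_, Or.inr (Or.inl rfl)⟩
      exact (two_ne_zero' i) (by linear_combination 2 * hh)
    have hbig : (Gr i).Adj (v + 1) (v - 1) := by
      rcases hv with hv | hv
      · refine ((big_adj (n := i) (x := v - 1) (y := v + 1) ?_ ?_)).symm
        · rw [cl_sub_one, hv]; decide
        · rw [cl_add_one, hv]; decide
      · refine big_adj ?_ ?_
        · rw [cl_add_one, hv]; decide
        · rw [cl_sub_one, hv]; decide
    have himg := adj_even_pair (f.map_adj_iff.mpr hbig) (step1 _ hv1) (step1 _ hv2)
    have hz1 : (Gr j).Adj (f v) (f (v + 1)) := f.map_adj_iff.mpr hadjp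
    have hz2 : (Gr j).Adj (f v) (f (v - 1)) := f.map_adj_iff.mpr hadjm
    rcases himg with ⟨ha, hb⟩ | ⟨ha, hb⟩
    · have hc := common_nbr ha hb hz1 hz2
      constructor
      · rcases hc.1 with h' | h'
        · right; rw [h']; ring
        · left; rw [h']; ring
      · rcases hc.2 with h' | h'
        · right; rw [h']; ring
        · left; rw [h']; ring
    · have hc := common_nbr hb ha hz2 hz1
      constructor
      · rcases hc.2 with h' | h'
        · right; rw [h']; ring
        · left; rw [h']; ring
      · rcases hc.1 with h' | h'
        · right; rw [h']; ring
        · left; rw [h']; ring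
  -- Step 3: every step is ±1.
  have step3 : ∀ x : ZMod (K i), f (x + 1) = f x + 1 ∨ f (x + 1) = f x - 1 := by
    intro x
    rcases cl_cases x with h' | h' | h' | h'
    · -- x even: apply step2 to v := x + 1, which is odd
      have hv : cl i (x + 1) = 1 ∨ cl i (x + 1) = 3 := by
        left; rw [cl_add_one, h']; decide
      have := (step2 (x + 1) hv).2
      rw [add_sub_cancel_right] at this
      rcases this with h'' | h''
      · right; rw [h'']; ring
      · left; rw [h'']; ring
    · exact (step2 x (Or.inl h')).1
    · have hv : cl i (x + 1) = 1 ∨ cl i (x + 1) = 3 := by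
        right; rw [cl_add_one, h']; decide
      have := (step2 (x + 1) hv).2
      rw [add_sub_cancel_right] at this
      rcases this with h'' | h''
      · right; rw [h'']; ring
      · left; rw [h'']; ring
    · exact (step2 x (Or.inr h')).1
  -- Step 4: the sign is constant along the cycle.
  obtain ⟨ε, hε, h0⟩ : ∃ ε : ZMod (K j), (ε = 1 ∨ ε = -1) ∧ f (0 + 1) = f 0 + ε := by
    rcases step3 0 with h' | h'
    · exact ⟨1, Or.inl rfl, h'⟩
    · exact ⟨-1, Or.inr rfl, by rw [h']; ring⟩
  have key : ∀ t : ℕ, f ((t : ZMod (K i)) + 1) = f (t : ZMod (K i)) + ε := by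
    intro t
    induction t with
    | zero => simpa using h0
    | succ t ih =>
      have hcast : ((t + 1 : ℕ) : ZMod (K i)) = (t : ZMod (K i)) + 1 := by push_cast; ring
      rw [hcast]
      rcases step3 ((t : ZMod (K i)) + 1) with h' | h'
      · rcases hε with rfl | rfl
        · exact h'
        · exfalso
          have heq : f ((t : ZMod (K i)) + 1 + 1) = f (t : ZMod (K i)) := by
            rw [h', ih]; ring
          have := f.injective heq
          exact (two_ne_zero' i) (by linear_combination this)
      · rcases hε with rfl | rfl
        · exfalso
          have heq : f ((t : ZMod (K i)) + 1 + 1) = f (t : ZMod (K i)) := by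
            rw [h', ih]; ring
          have := f.injective heq
          exact (two_ne_zero' i) (by linear_combination this)
        · rw [h']; ring
  have key2 : ∀ t : ℕ, f (t : ZMod (K i)) = f 0 + ε * t := by
    intro t
    induction t with
    | zero => simp
    | succ t ih =>
      have hcast : ((t + 1 : ℕ) : ZMod (K i)) = (t : ZMod (K i)) + 1 := by push_cast; ring
      rw [hcast, key t, ih]
      push_cast
      ring
  have h5 := key2 (K i)
  rw [ZMod.natCast_self] at h5
  have h6 : ε * ((K i : ℕ) : ZMod (K j)) = 0 := by linear_combination h5.symm
  have h7 : ((K i : ℕ) : ZMod (K j)) = 0 := by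
    rcases hε with rfl | rfl
    · simpa using h6
    · simpa [neg_eq_zero] using h6
  have h8 : K j ∣ K i := (ZMod.natCast_eq_zero_iff _ _).mp h7
  have h9 := Nat.le_of_dvd (K_pos i) h8
  unfold K at h9
  omega

lemma antichain {i j : ℕ} (h : i ≠ j) : IsEmpty (Gr i ↪g Gr j) := by
  rcases lt_or_gt_of_ne h with h' | h'
  · exact no_embed_up h'
  · exact no_embed_down h'

end DiamondAntichain

/-- There is an infinite antichain of (diamond, P₂+P₄, P₆)-free graphs with respect to
the induced subgraph relation; consequently this class of graphs is not
well-quasi-ordered by the induced subgraph relation. -/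
theorem diamond_P2P4_P6_free_antichain :
    (∃ (V : ℕ → Type) (_ : ∀ n, Fintype (V n)) (G : ∀ n, SimpleGraph (V n)),
      (∀ n, IsEmpty (diamond ↪g G n) ∧ IsEmpty (P2P4 ↪g G n) ∧ IsEmpty (P6 ↪g G n)) ∧
      (∀ i j : ℕ, i ≠ j → IsEmpty (G i ↪g G j))) ∧
    ¬ (∀ (V : ℕ → Type) (_ : ∀ n, Fintype (V n)) (G : ∀ n, SimpleGraph (V n)),
        (∀ n, IsEmpty (diamond ↪g G n) ∧ IsEmpty (P2P4 ↪g G n) ∧ IsEmpty (P6 ↪g G n)) →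
        ∃ i j : ℕ, i < j ∧ Nonempty (G i ↪g G j)) := by
  constructor
  · refine ⟨fun n => ZMod (DiamondAntichain.K n), fun n => inferInstance,
      fun n => DiamondAntichain.Gr n, fun n => ⟨DiamondAntichain.diamond_free n,
        DiamondAntichain.p2p4_free n, DiamondAntichain.p6_free n⟩, ?_⟩
    intro i j hij
    exact DiamondAntichain.antichain hij
  · intro hcon
    obtain ⟨i, j, hij, ⟨g⟩⟩ := hcon (fun n => ZMod (DiamondAntichain.K n))
      (fun n => inferInstance) (fun n => DiamondAntichain.Gr n)
      (fun n => ⟨DiamondAntichain.diamond_free n,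
        DiamondAntichain.p2p4_free n, DiamondAntichain.p6_free n⟩)
    exact (DiamondAntichain.antichain (Nat.ne_of_lt hij)).false g
end

section
/- Let 𝒳 be a class of finite simple graphs and suppose that for each graph G in 𝒳 a set Z_G of vertices of G is chosen. Let 𝒴 be the class consisting of, for each G in 𝒳, the graph obtained from G by the subgraph complementation with respect to Z_G. Then 𝒳 is well-quasi-ordered by the labelled induced subgraph relation if and only if 𝒴 is well-quasi-ordered by the labelled induced subgraph relation. -/
/-- The subgraph complementation of `G` with respect to a set `Z` of vertices:
two distinct vertices are adjacent iff either both lie in `Z` and were non-adjacent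
in `G`, or not both lie in `Z` and they were adjacent in `G`. -/
def subgraphComplement {V : Type} (G : SimpleGraph V) (Z : Set V) : SimpleGraph V where
  Adj u v := u ≠ v ∧
    ((u ∈ Z ∧ v ∈ Z ∧ ¬G.Adj u v) ∨ (¬(u ∈ Z ∧ v ∈ Z) ∧ G.Adj u v))
  symm := ⟨by
    rintro u v ⟨h, h2⟩
    have hs : G.Adj u v ↔ G.Adj v u := ⟨fun h => G.adj_symm h, fun h => G.adj_symm h⟩
    exact ⟨h.symm, by tauto⟩⟩
  loopless := ⟨fun u h => h.1 rfl⟩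

/-- A family of graphs `G i` (indexed by `ι`) is well-quasi-ordered by the labelled
induced subgraph relation: for every well-quasi-order `(W, le)` and every sequence of
graphs from the family labelled by `W`, some earlier graph embeds into a later one
respecting labels. -/
def LabelledWqoFamily {ι : Type} {V : ι → Type} (G : ∀ i, SimpleGraph (V i)) : Prop :=
  ∀ (W : Type) (le : W → W → Prop), Reflexive le → Transitive le →
    (∀ s : ℕ → W, ∃ i j : ℕ, i < j ∧ le (s i) (s j)) →
    ∀ (g : ℕ → ι) (l : ∀ n : ℕ, V (g n) → W),
      ∃ i j : ℕ, i < j ∧ ∃ f : G (g i) ↪g G (g j), ∀ v, le (l i v) (l j (f v))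

open Classical in
lemma aux_mp {ι : Type} {V : ι → Type}
    (G : ∀ i, SimpleGraph (V i)) (Z : ∀ i, Set (V i))
    (hG : LabelledWqoFamily G) :
    LabelledWqoFamily (fun i => subgraphComplement (G i) (Z i)) := by
  intro W le hrefl htrans hwqo g l
  -- product order on W × Prop
  set le' : W × Prop → W × Prop → Prop := fun a b => le a.1 b.1 ∧ (a.2 ↔ b.2) with hle'
  have hrefl' : Reflexive le' := fun a => ⟨hrefl a.1, Iff.rfl⟩
  have htrans' : Transitive le' := fun a b c hab hbc =>
    ⟨htrans hab.1 hbc.1, hab.2.trans hbc.2⟩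
  have hwqo' : ∀ s : ℕ → W × Prop, ∃ i j : ℕ, i < j ∧ le' (s i) (s j) := by
    intro s
    -- one of the truth values occurs infinitely often
    have : ({n | (s n).2} : Set ℕ).Infinite ∨ ({n | ¬ (s n).2} : Set ℕ).Infinite := by
      by_contra h
      push_neg at h
      have : (Set.univ : Set ℕ).Finite := by
        have := h.1.union h.2
        convert this using 1
        ext n; simp [Set.mem_union]; tauto
      exact Set.infinite_univ this
    rcases this with hinf | hinf
    · obtain ⟨i, j, hij, hle⟩ := hwqo (fun n => (s (Nat.nth (fun n => (s n).2) n)).1)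
      exact ⟨_, _, Nat.nth_strictMono hinf hij, hle,
        iff_of_true (Nat.nth_mem_of_infinite hinf i) (Nat.nth_mem_of_infinite hinf j)⟩
    · obtain ⟨i, j, hij, hle⟩ := hwqo (fun n => (s (Nat.nth (fun n => ¬ (s n).2) n)).1)
      exact ⟨_, _, Nat.nth_strictMono hinf hij, hle,
        iff_of_false (Nat.nth_mem_of_infinite hinf i) (Nat.nth_mem_of_infinite hinf j)⟩
  obtain ⟨i, j, hij, f, hf⟩ := hG (W × Prop) le' hrefl' htrans' hwqo' g
    (fun n v => (l n v, v ∈ Z (g n)))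
  refine ⟨i, j, hij, ⟨f.toEmbedding, ?_⟩, fun v => (hf v).1⟩
  intro u v
  have hadj : (G (g i)).Adj u v ↔ (G (g j)).Adj (f.toEmbedding u) (f.toEmbedding v) :=
    f.map_adj_iff.symm
  have hne : u ≠ v ↔ (f.toEmbedding u : V (g j)) ≠ f.toEmbedding v :=
    (f.toEmbedding.injective.ne_iff).symm
  have h1 : u ∈ Z (g i) ↔ f.toEmbedding u ∈ Z (g j) := (hf u).2
  have h2 : v ∈ Z (g i) ↔ f.toEmbedding v ∈ Z (g j) := (hf v).2
  simp only [subgraphComplement]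
  rw [← hne, ← hadj, ← h1, ← h2]

/-- Subgraph complementation preserves well-quasi-orderability by the labelled induced
subgraph relation: if for each graph `G i` in a class a vertex set `Z i` is chosen, then
the class is labelled-wqo iff the class of graphs obtained by complementing each `G i`
on `Z i` is labelled-wqo. -/
theorem subgraphComplement_labelled_wqo_iff
    {ι : Type} {V : ι → Type} [∀ i, Fintype (V i)]
    (G : ∀ i, SimpleGraph (V i)) (Z : ∀ i, Set (V i)) :
    LabelledWqoFamily G ↔ LabelledWqoFamily (fun i => subgraphComplement (G i) (Z i)) := by
  constructor
  · exact aux_mp G Z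
  · intro h
    have h2 := aux_mp (fun i => subgraphComplement (G i) (Z i)) Z h
    have heq : (fun i => subgraphComplement (subgraphComplement (G i) (Z i)) (Z i)) = G := by
      funext i
      ext u v
      simp only [subgraphComplement]
      constructor
      · rintro ⟨h1, h2⟩
        rcases h2 with ⟨ha, hb, hc⟩ | ⟨ha, hb⟩
        · by_contra hadj
          exact hc ⟨h1, Or.inl ⟨ha, hb, hadj⟩⟩
        · rcases hb.2 with ⟨hz1, hz2, _⟩ | ⟨_, hadj⟩
          · exact absurd ⟨hz1, hz2⟩ ha
          · exact hadj
      · intro hadj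
        refine ⟨hadj.ne, ?_⟩
        by_cases hz : u ∈ Z i ∧ v ∈ Z i
        · exact Or.inl ⟨hz.1, hz.2, fun h => h.2.elim (fun h' => h'.2.2 hadj) (fun h' => h'.1 hz)⟩
        · exact Or.inr ⟨hz, hadj.ne, Or.inr ⟨hz, hadj⟩⟩
    rwa [heq] at h2
end

section
/- Let 𝒳 be a class of finite simple graphs and suppose that for each graph G in 𝒳 two disjoint sets X_G and Y_G of vertices of G are chosen. Let 𝒴 be the class consisting of, for each G in 𝒳, the graph obtained from G by the bipartite complementation with respect to X_G and Y_G. Then 𝒳 is well-quasi-ordered by the labelled induced subgraph relation if and only if 𝒴 is well-quasi-ordered by the labelled induced subgraph relation. -/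
/-- The bipartite complementation of `G` with respect to disjoint vertex sets `X`, `Y`:
two distinct vertices are adjacent iff either one lies in `X` and the other in `Y` and
they were non-adjacent in `G`, or otherwise they were adjacent in `G`. -/
def bipartiteComplement {V : Type} (G : SimpleGraph V) (X Y : Set V) : SimpleGraph V where
  Adj u v := u ≠ v ∧
    ((((u ∈ X ∧ v ∈ Y) ∨ (u ∈ Y ∧ v ∈ X)) ∧ ¬G.Adj u v) ∨
     (¬((u ∈ X ∧ v ∈ Y) ∨ (u ∈ Y ∧ v ∈ X)) ∧ G.Adj u v))
  symm := ⟨by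
    rintro u v ⟨h, h2⟩
    have hs : G.Adj u v ↔ G.Adj v u := ⟨fun h => G.adj_symm h, fun h => G.adj_symm h⟩
    exact ⟨h.symm, by tauto⟩⟩
  loopless := ⟨fun u h => h.1 rfl⟩

private lemma wqo_prod_prop {W : Type} (le : W → W → Prop)
    (hwqo : ∀ s : ℕ → W, ∃ i j : ℕ, i < j ∧ le (s i) (s j)) :
    ∀ s : ℕ → W × Prop × Prop, ∃ i j : ℕ, i < j ∧
      le (s i).1 (s j).1 ∧ (s i).2 = (s j).2 := by
  intro s
  obtain ⟨y, hy⟩ := Finite.exists_infinite_fiber (fun n => (s n).2)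
  rw [Set.infinite_coe_iff] at hy
  have hy' : (setOf (fun n => (s n).2 = y)).Infinite := hy
  set φ := Nat.nth (fun n => (s n).2 = y) with hφ
  obtain ⟨i, j, hij, hle⟩ := hwqo (fun n => (s (φ n)).1)
  refine ⟨φ i, φ j, Nat.nth_strictMono hy' hij, hle, ?_⟩
  rw [Nat.nth_mem_of_infinite hy' i, Nat.nth_mem_of_infinite hy' j]

private lemma wqo_forward {ι : Type} {V : ι → Type}
    (G : ∀ i, SimpleGraph (V i)) (X Y : ∀ i, Set (V i)) (hG : LabelledWqoFamily G) :
    LabelledWqoFamily (fun i => bipartiteComplement (G i) (X i) (Y i)) := by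
  intro W le hrefl htrans hwqo g l
  obtain ⟨i, j, hij, f, hf⟩ := hG (W × Prop × Prop)
    (fun a b => le a.1 b.1 ∧ a.2 = b.2)
    (fun a => ⟨hrefl a.1, rfl⟩)
    (fun a b c hab hbc => ⟨htrans hab.1 hbc.1, hab.2.trans hbc.2⟩)
    (wqo_prod_prop le hwqo) g
    (fun n v => (l n v, v ∈ X (g n), v ∈ Y (g n)))
  refine ⟨i, j, hij, ⟨f.toEmbedding, ?_⟩, fun v => (hf v).1⟩
  intro u v
  have hne : f u = f v ↔ u = v := f.toEmbedding.injective.eq_iff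
  have hadj : (G (g j)).Adj (f u) (f v) ↔ (G (g i)).Adj u v := f.map_adj_iff
  have hXu : (u ∈ X (g i)) = (f u ∈ X (g j)) := congrArg (fun p => p.1) (hf u).2
  have hYu : (u ∈ Y (g i)) = (f u ∈ Y (g j)) := congrArg (fun p => p.2) (hf u).2
  have hXv : (v ∈ X (g i)) = (f v ∈ X (g j)) := congrArg (fun p => p.1) (hf v).2
  have hYv : (v ∈ Y (g i)) = (f v ∈ Y (g j)) := congrArg (fun p => p.2) (hf v).2
  show (bipartiteComplement (G (g j)) _ _).Adj (f u) (f v) ↔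
    (bipartiteComplement (G (g i)) _ _).Adj u v
  simp only [bipartiteComplement, ← hXu, ← hYu, ← hXv, ← hYv]
  simp only [ne_eq, hne, hadj]

private lemma bc_involutive {V : Type} (G : SimpleGraph V) (X Y : Set V) :
    bipartiteComplement (bipartiteComplement G X Y) X Y = G := by
  ext u v
  by_cases huv : u = v
  · subst huv
    simp [bipartiteComplement]
  · simp only [bipartiteComplement, ne_eq, huv, not_false_eq_true, true_and]
    tauto

/-- Bipartite complementation preserves well-quasi-orderability by the labelled induced
subgraph relation: if for each graph `G i` in a class disjoint vertex sets `X i`, `Y i`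
are chosen, then the class is labelled-wqo iff the class of graphs obtained by
bipartite-complementing each `G i` with respect to `X i`, `Y i` is labelled-wqo. -/
theorem bipartiteComplement_labelled_wqo_iff
    {ι : Type} {V : ι → Type} [∀ i, Fintype (V i)]
    (G : ∀ i, SimpleGraph (V i)) (X Y : ∀ i, Set (V i))
    (hdisj : ∀ i, Disjoint (X i) (Y i)) :
    LabelledWqoFamily G ↔
      LabelledWqoFamily (fun i => bipartiteComplement (G i) (X i) (Y i)) := by
  constructor
  · exact wqo_forward G X Y
  · intro h
    have := wqo_forward (fun i => bipartiteComplement (G i) (X i) (Y i)) X Y h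
    simpa only [bc_involutive] using this
end

section
/- Let 𝒳 be a class of finite simple graphs, each having at least one vertex, and suppose that for each graph G in 𝒳 a vertex z_G of G is chosen. Let 𝒴 be the class consisting of, for each G in 𝒳, the graph G − z_G, i.e. the induced subgraph of G on the vertex set V(G) \ {z_G}. Then 𝒳 is well-quasi-ordered by the labelled induced subgraph relation if and only if 𝒴 is well-quasi-ordered by the labelled induced subgraph relation. -/
private def ole {W : Type} (le : W → W → Prop) : Option W → Option W → Prop
  | none, none => True
  | some a, some b => le a b
  | none, some _ => False
  | some _, none => False

private lemma ole_refl {W : Type} (le : W → W → Prop) (h : Reflexive le) :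
    Reflexive (ole le) := by
  intro a; cases a <;> simp [ole]; exact h _

private lemma ole_trans {W : Type} (le : W → W → Prop) (h : Transitive le) :
    Transitive (ole le) := by
  intro a b c hab hbc
  cases a <;> cases b <;> cases c <;> simp_all [ole]
  exact h hab hbc

private lemma exists_mono_subseq {W : Type} (le : W → W → Prop)
    (hr : Reflexive le) (ht : Transitive le)
    (hw : ∀ s : ℕ → W, ∃ i j : ℕ, i < j ∧ le (s i) (s j)) (s : ℕ → W) :
    ∃ φ : ℕ → ℕ, StrictMono φ ∧ ∀ m n, m ≤ n → le (s (φ m)) (s (φ n)) := by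
  letI : IsRefl W le := ⟨hr⟩
  letI : IsTrans W le := ⟨fun _ _ _ h1 h2 => ht h1 h2⟩
  letI : IsPreorder W le := { refl := hr, trans := fun _ _ _ h1 h2 => ht h1 h2 }
  have h : (Set.univ : Set W).PartiallyWellOrderedOn le := fun f => hw (fun n => (f n).1)
  obtain ⟨g, hg⟩ := h.exists_monotone_subseq (f := s) (fun _ => Set.mem_univ _)
  exact ⟨g, g.strictMono, hg⟩

private lemma ole_wqo {W : Type} (le : W → W → Prop)
    (hw : ∀ s : ℕ → W, ∃ i j : ℕ, i < j ∧ le (s i) (s j)) (s : ℕ → Option W) :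
    ∃ i j : ℕ, i < j ∧ ole le (s i) (s j) := by
  by_cases hfin : {n | s n = none}.Infinite
  · obtain ⟨i, hi⟩ := hfin.nonempty
    obtain ⟨j, hj, hij⟩ := hfin.exists_gt i
    refine ⟨i, j, hij, ?_⟩
    simp only [Set.mem_setOf_eq] at hi hj
    rw [hi, hj]; trivial
  · rw [Set.not_infinite] at hfin
    obtain ⟨N, hN⟩ := hfin.bddAbove
    have hs : ∀ n, ∃ w, s (n + N + 1) = some w := by
      intro n
      cases h : s (n + N + 1) with
      | none => exact absurd (hN h) (by omega)
      | some w => exact ⟨w, rfl⟩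
    choose t ht using hs
    obtain ⟨i, j, hij, hle⟩ := hw t
    refine ⟨i + N + 1, j + N + 1, by omega, ?_⟩
    rw [ht i, ht j]; exact hle

private lemma bool_wqo (s : ℕ → Bool) : ∃ i j : ℕ, i < j ∧ s i = s j := by
  obtain ⟨i, j, hne, h⟩ := Finite.exists_ne_map_eq_of_infinite s
  rcases hne.lt_or_gt with h' | h'
  · exact ⟨i, j, h', h⟩
  · exact ⟨j, i, h', h.symm⟩

private lemma prod_wqo {A B : Type} (la : A → A → Prop) (lb : B → B → Prop)
    (hra : Reflexive la) (hta : Transitive la)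
    (hwa : ∀ s : ℕ → A, ∃ i j : ℕ, i < j ∧ la (s i) (s j))
    (hwb : ∀ s : ℕ → B, ∃ i j : ℕ, i < j ∧ lb (s i) (s j)) :
    ∀ s : ℕ → A × B, ∃ i j : ℕ, i < j ∧ la (s i).1 (s j).1 ∧ lb (s i).2 (s j).2 := by
  intro s
  obtain ⟨φ, hφ, hmono⟩ := exists_mono_subseq la hra hta hwa (fun n => (s n).1)
  obtain ⟨i, j, hij, hb⟩ := hwb (fun n => (s (φ n)).2)
  exact ⟨φ i, φ j, hφ hij, hmono i j hij.le, hb⟩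

/-- Vertex deletion preserves well-quasi-orderability by the labelled induced subgraph
relation: if for each graph `G i` in a class (each having at least one vertex) a vertex
`z i` is chosen, then the class is labelled-wqo iff the class of graphs `G i − z i`
(the induced subgraphs on the remaining vertices) is labelled-wqo. -/
theorem vertexDeletion_labelled_wqo_iff
    {ι : Type} {V : ι → Type} [∀ i, Fintype (V i)]
    (G : ∀ i, SimpleGraph (V i)) (z : ∀ i, V i) :
    LabelledWqoFamily G ↔
      LabelledWqoFamily (fun i => (G i).induce {v : V i | v ≠ z i}) := by
  classical
  constructor
  · -- forward direction
    intro hX W le hr ht hw g l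
    obtain ⟨i, j, hij, F, hF⟩ := hX (Option W) (ole le) (ole_refl le hr) (ole_trans le ht)
      (ole_wqo le hw) g
      (fun n v => if h : v = z (g n) then none else some (l n ⟨v, h⟩))
    have hmap : ∀ (v : V (g i)), v ≠ z (g i) → F v ≠ z (g j) := by
      intro v h hc
      have h2 := hF v
      rw [dif_neg h, dif_pos hc] at h2
      exact h2
    refine ⟨i, j, hij, ⟨⟨fun v => ⟨F v.1, hmap v.1 v.2⟩, ?_⟩, ?_⟩, ?_⟩
    · intro a b hab
      exact Subtype.ext (F.injective (congrArg Subtype.val hab))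
    · intro a b
      exact F.map_rel_iff
    · intro v
      have h2 := hF v.1
      rw [dif_neg v.2, dif_neg (hmap v.1 v.2)] at h2
      exact h2
  · -- backward direction
    intro hY W le hr ht hw g l
    -- extract a subsequence along which the labels of the deleted vertices increase
    obtain ⟨φ, hφ, hmono⟩ := exists_mono_subseq le hr ht hw (fun n => l n (z (g n)))
    -- labelled wqo of the deleted family with labels in W × Bool
    have hw2 := prod_wqo le (fun a b : Bool => a = b) hr ht hw bool_wqo
    obtain ⟨i, j, hij, F, hF⟩ := hY (W × Bool)
      (fun p q => le p.1 q.1 ∧ p.2 = q.2)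
      (fun p => ⟨hr p.1, rfl⟩)
      (fun p q r h1 h2 => ⟨ht h1.1 h2.1, h1.2.trans h2.2⟩)
      hw2 (g ∘ φ)
      (fun n v => (l (φ n) v.1, decide ((G (g (φ n))).Adj v.1 (z (g (φ n))))))
    -- build the embedding on the full graphs
    refine ⟨φ i, φ j, hφ hij, ⟨⟨fun v => if h : v = z (g (φ i)) then z (g (φ j))
      else (F ⟨v, h⟩).1, ?_⟩, ?_⟩, ?_⟩
    · intro a b hab
      simp only at hab
      by_cases ha : a = z (g (φ i)) <;> by_cases hb : b = z (g (φ i))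
      · rw [ha, hb]
      · rw [dif_pos ha, dif_neg hb] at hab
        exact absurd hab.symm (F ⟨b, hb⟩).2
      · rw [dif_neg ha, dif_pos hb] at hab
        exact absurd hab (F ⟨a, ha⟩).2
      · rw [dif_neg ha, dif_neg hb] at hab
        have := F.injective (Subtype.ext hab)
        exact congrArg Subtype.val this
    · intro a b
      simp only [Function.Embedding.coeFn_mk]
      have adjiff : ∀ (v : V (g (φ i))) (h : v ≠ z (g (φ i))),
          ((G (g (φ j))).Adj (F ⟨v, h⟩).1 (z (g (φ j))) ↔
            (G (g (φ i))).Adj v (z (g (φ i)))) := by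
        intro v h
        have := (hF ⟨v, h⟩).2
        simp only [decide_eq_decide] at this
        exact this.symm
      by_cases ha : a = z (g (φ i)) <;> by_cases hb : b = z (g (φ i))
      · rw [dif_pos ha, dif_pos hb, ha, hb]
        simp
      · rw [dif_pos ha, dif_neg hb, ha]
        rw [(G (g (φ j))).adj_comm, (G (g (φ i))).adj_comm]
        exact adjiff b hb
      · rw [dif_neg ha, dif_pos hb, hb]
        exact adjiff a ha
      · rw [dif_neg ha, dif_neg hb]
        exact F.map_rel_iff (a := ⟨a, ha⟩) (b := ⟨b, hb⟩)
    · intro v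
      by_cases hv : v = z (g (φ i))
      · simp only [Function.Embedding.coeFn_mk, RelEmbedding.coe_mk]
        rw [dif_pos hv, hv]
        exact hmono i j hij.le
      · simp only [Function.Embedding.coeFn_mk, RelEmbedding.coe_mk]
        rw [dif_neg hv]
        exact (hF ⟨v, hv⟩).1
end
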